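/- Let Ω ⊆ ℝⁿ be an open bounded convex set and let u : closure(Ω) → ℝ be a continuous function with u = 0 on ∂Ω, u > 0 on Ω, and log u concave on Ω. Fix ε > 0 and set ρ(ε) := 2√(ε·sup_Ω |u|). If x ∈ Ω satisfies dist(x, ∂Ω) > ρ(ε), the sup-convolution u^ε is differentiable at x, and ∇u^ε(x) = 0, then u(x) = max_{closure(Ω)} u. -/

import Mathlib

/-!
Let `y` realise the supremum defining `u^ε(x)`. Comparing with `y = x` gives
`‖x - y‖² ≤ 2ε (u y - u x) ≤ ρ(ε)²`, so `y` lies in `Ω`, and the paraboloid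
`z ↦ u y - ‖z - y‖² / (2ε)` touches `u^ε` from below at `x`. Its gradient `(y - x) / ε` must
then equal `∇u^ε(x) = 0`, so `y = x`, i.e. `u ≤ u x + ‖· - x‖² / (2ε)` on `Ω`. A concave function
(here `log u`) lying below its value at `x` plus a quadratic term is maximal at `x`: along each
segment from `x` its chord slope is bounded by the quadratic term, which vanishes at `x`.
-/

open Set Metric

/-- The sup-convolution `u^ε` of a function `u : Ω → ℝ`. -/
noncomputable def supConv {n : ℕ} (ε : ℝ) (Ω : Set (EuclideanSpace ℝ (Fin n)))
    (u : EuclideanSpace ℝ (Fin n) → ℝ) (x : EuclideanSpace ℝ (Fin n)) : ℝ :=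
  sSup ((fun y => u y - ‖x - y‖ ^ 2 / (2 * ε)) '' Ω)

/-- The radius `ρ(ε) = 2 √(ε ⬝ sup_Ω |u|)`. -/
noncomputable def rho {n : ℕ} (ε : ℝ) (Ω : Set (EuclideanSpace ℝ (Fin n)))
    (u : EuclideanSpace ℝ (Fin n) → ℝ) : ℝ :=
  2 * Real.sqrt (ε * sSup ((fun y => |u y|) '' Ω))

open Filter Topology

theorem ContinuousOn.le_csSup_image_of_mem_closure {X α : Type*} [TopologicalSpace X]
    [ConditionallyCompleteLinearOrder α] [TopologicalSpace α] [OrderClosedTopology α]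
    {f : X → α} {s : Set X} {x : X} (hf : ContinuousOn f (closure s)) (hb : BddAbove (f '' s))
    (hx : x ∈ closure s) : f x ≤ sSup (f '' s) :=
  closure_minimal (fun _ hy => le_csSup hb hy) isClosed_Iic
    (hf.image_closure (mem_image_of_mem f hx))

theorem HasFDerivAt.eq_of_eventuallyLE_of_eq {E : Type*} [NormedAddCommGroup E]
    [NormedSpace ℝ E] {f g : E → ℝ} {f' g' : E →L[ℝ] ℝ} {x : E} (hf : HasFDerivAt f f' x)
    (hg : HasFDerivAt g g' x) (hle : g ≤ᶠ[𝓝 x] f) (heq : g x = f x) : f' = g' := by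
  have hmin : IsLocalMin (f - g) x := hle.mono fun z hz => by
    simp only [Pi.sub_apply, heq, sub_self, sub_nonneg]
    exact hz
  exact sub_eq_zero.1 (hmin.hasFDerivAt_eq_zero (hf.sub hg))

theorem hasFDerivAt_const_sub_norm_sub_sq_div {E : Type*} [NormedAddCommGroup E]
    [InnerProductSpace ℝ E] (c ε : ℝ) (y x : E) :
    HasFDerivAt (fun z => c - ‖z - y‖ ^ 2 / (2 * ε)) (-(ε⁻¹ • innerSL ℝ (x - y))) x := by
  have hsq : HasFDerivAt (fun z => ‖z - y‖ ^ 2) (2 • innerSL ℝ (x - y)) x := by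
    simpa using ((hasFDerivAt_id x).sub_const y).norm_sq
  have hfun : (fun z => c - ‖z - y‖ ^ 2 / (2 * ε)) = fun z => c - (2 * ε)⁻¹ * ‖z - y‖ ^ 2 := by
    funext z
    ring
  rw [hfun]
  refine ((hsq.const_mul (2 * ε)⁻¹).const_sub c).congr_fderiv ?_
  ext v
  simp only [mul_inv_rev, map_sub, neg_apply, smul_apply, sub_apply, coe_innerSL_apply,
    nsmul_eq_mul, Nat.cast_ofNat, smul_eq_mul, neg_inj]
  ring

theorem ConcaveOn.isMaxOn_of_le_add_mul_norm_sq {E : Type*} [NormedAddCommGroup E]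
    [NormedSpace ℝ E] {s : Set E} {f : E → ℝ} {x : E} {C : ℝ} (hf : ConcaveOn ℝ s f)
    (hx : x ∈ s) (hC : ∀ z ∈ s, f z ≤ f x + C * ‖z - x‖ ^ 2) : IsMaxOn f s x := by
  refine isMaxOn_iff.2 fun y hy => ?_
  have hslope : ∀ t ∈ Ioo (0 : ℝ) 1, f y - f x ≤ C * ‖y - x‖ ^ 2 * t := by
    rintro t ⟨ht0, ht1⟩
    have hconc := hf.2 hx hy (sub_pos.2 ht1).le ht0.le (sub_add_cancel 1 t)
    have hup := hC _ (hf.1 hx hy (sub_pos.2 ht1).le ht0.le (sub_add_cancel 1 t))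
    have hseg : (1 - t) • x + t • y - x = t • (y - x) := by module
    rw [hseg, norm_smul, Real.norm_of_nonneg ht0.le] at hup
    simp only [smul_eq_mul] at hconc
    have : t * (f y - f x) ≤ t * (C * ‖y - x‖ ^ 2 * t) := by nlinarith
    exact le_of_mul_le_mul_left this ht0
  have hlim : Tendsto (fun t => C * ‖y - x‖ ^ 2 * t) (𝓝[>] 0) (𝓝 0) := by
    simpa using ((continuous_const_mul (C * ‖y - x‖ ^ 2)).tendsto 0).mono_left nhdsWithin_le_nhds
  exact sub_nonpos.1 (ge_of_tendsto hlim (eventually_of_mem (Ioo_mem_nhdsGT one_pos) hslope))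

theorem Real.log_le_log_add_div {a b c : ℝ} (ha : 0 < a) (hb : 0 < b) (h : b ≤ a + c) :
    Real.log b ≤ Real.log a + c / a := by
  have hlog := Real.log_le_sub_one_of_pos (div_pos hb ha)
  rw [Real.log_div hb.ne' ha.ne', div_sub_one ha.ne'] at hlog
  have : (b - a) / a ≤ c / a := by gcongr; linarith
  linarith

theorem le_two_mul_sqrt_of_le_sub_sq_div {a b d M ε : ℝ} (hε : 0 < ε) (hd : 0 ≤ d)
    (ha : |a| ≤ M) (hb : |b| ≤ M) (h : a ≤ b - d ^ 2 / (2 * ε)) : d ≤ 2 * √(ε * M) := by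
  have hM : 0 ≤ ε * M := mul_nonneg hε.le ((abs_nonneg a).trans ha)
  have hd2 : d ^ 2 ≤ (b - a) * (2 * ε) := (div_le_iff₀ (by positivity)).1 (by linarith)
  refine (pow_le_pow_iff_left₀ hd (by positivity) two_ne_zero).1 ?_
  rw [mul_pow, Real.sq_sqrt hM]
  nlinarith [abs_le.1 ha, abs_le.1 hb]

section SupConv

variable {n : ℕ} {Ω : Set (EuclideanSpace ℝ (Fin n))} {u : EuclideanSpace ℝ (Fin n) → ℝ}
  {ε : ℝ}

theorem le_supConv (hu : BddAbove (u '' Ω)) (hε : 0 ≤ ε) (x : EuclideanSpace ℝ (Fin n))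
    {y : EuclideanSpace ℝ (Fin n)} (hy : y ∈ Ω) :
    u y - ‖x - y‖ ^ 2 / (2 * ε) ≤ supConv ε Ω u x := by
  obtain ⟨M, hM⟩ := hu
  refine le_csSup ⟨M, ?_⟩ (mem_image_of_mem _ hy)
  rintro _ ⟨z, hz, rfl⟩
  have : 0 ≤ ‖x - z‖ ^ 2 / (2 * ε) := by positivity
  linarith [hM (mem_image_of_mem u hz)]

theorem exists_supConv_eq (hK : IsCompact (closure Ω)) (hu : ContinuousOn u (closure Ω))
    (hne : Ω.Nonempty) (x : EuclideanSpace ℝ (Fin n)) :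
    ∃ y ∈ closure Ω, supConv ε Ω u x = u y - ‖x - y‖ ^ 2 / (2 * ε) := by
  set g := fun y => u y - ‖x - y‖ ^ 2 / (2 * ε)
  have hg : ContinuousOn g (closure Ω) := hu.sub (by fun_prop)
  obtain ⟨y, hy, hmax⟩ := hK.exists_isMaxOn hne.closure hg
  have hub : g y ∈ upperBounds (g '' Ω) := by
    rintro _ ⟨z, hz, rfl⟩
    exact hmax (subset_closure hz)
  exact ⟨y, hy, le_antisymm (csSup_le (hne.image g) hub)
    (hg.le_csSup_image_of_mem_closure ⟨g y, hub⟩ hy)⟩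

theorem eq_of_hasFDerivAt_supConv_zero (hu : BddAbove (u '' Ω)) (hε : 0 < ε)
    {x y : EuclideanSpace ℝ (Fin n)} (hy : y ∈ Ω)
    (hxy : supConv ε Ω u x = u y - ‖x - y‖ ^ 2 / (2 * ε))
    (h0 : HasFDerivAt (supConv ε Ω u) (0 : EuclideanSpace ℝ (Fin n) →L[ℝ] ℝ) x) : y = x := by
  have hpar := h0.eq_of_eventuallyLE_of_eq (hasFDerivAt_const_sub_norm_sub_sq_div (u y) ε y x)
    (Eventually.of_forall fun z => le_supConv hu hε.le z hy) hxy.symm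
  have hnorm := congrArg (fun L : EuclideanSpace ℝ (Fin n) →L[ℝ] ℝ => L (x - y)) hpar
  simp only [zero_apply, neg_apply, smul_apply, innerSL_apply_apply, smul_eq_mul, zero_eq_neg,
    mul_eq_zero, inv_eq_zero, hε.ne', inner_self_eq_zero, sub_eq_zero, false_or] at hnorm
  exact hnorm.symm

theorem isMaxOn_of_supConv_eq_self (hu : BddAbove (u '' Ω)) (hupos : ∀ x ∈ Ω, 0 < u x)
    (hlogconc : ConcaveOn ℝ Ω (fun x => Real.log (u x))) (hε : 0 < ε)
    {x : EuclideanSpace ℝ (Fin n)} (hx : x ∈ Ω) (hfix : supConv ε Ω u x = u x) :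
    IsMaxOn u Ω x := by
  have hlogmax : IsMaxOn (fun z => Real.log (u z)) Ω x := by
    refine hlogconc.isMaxOn_of_le_add_mul_norm_sq (C := (2 * ε * u x)⁻¹) hx fun z hz => ?_
    have hz' := hfix ▸ le_supConv hu hε.le x hz
    have := Real.log_le_log_add_div (hupos x hx) (hupos z hz)
      (c := ‖z - x‖ ^ 2 / (2 * ε)) (by rw [norm_sub_rev]; linarith)
    convert this using 2
    field_simp
  exact isMaxOn_iff.2 fun z hz =>
    (Real.log_le_log_iff (hupos z hz) (hupos x hx)).1 (isMaxOn_iff.1 hlogmax z hz)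

end SupConv

theorem supConv_critical_point_is_max_general
    {n : ℕ} (Ω : Set (EuclideanSpace ℝ (Fin n)))
    (hΩopen : IsOpen Ω) (hΩbdd : Bornology.IsBounded Ω)
    (u : EuclideanSpace ℝ (Fin n) → ℝ)
    (hu : ContinuousOn u (closure Ω))
    (hupos : ∀ x ∈ Ω, 0 < u x)
    (hlogconc : ConcaveOn ℝ Ω (fun x => Real.log (u x)))
    (ε : ℝ) (hε : 0 < ε)
    (x : EuclideanSpace ℝ (Fin n)) (hx : x ∈ Ω)
    (hdist : rho ε Ω u < Metric.infDist x (frontier Ω))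
    (hdiff : DifferentiableAt ℝ (supConv ε Ω u) x)
    (hgrad : gradient (supConv ε Ω u) x = 0) :
    u x = sSup (u '' closure Ω) := by
  have hK := hΩbdd.isCompact_closure
  have hbdd : BddAbove (u '' Ω) := (hK.bddAbove_image hu).mono (image_mono subset_closure)
  have habs : BddAbove ((fun y => |u y|) '' Ω) :=
    (hK.bddAbove_image hu.abs).mono (image_mono subset_closure)
  obtain ⟨y, hycl, hy⟩ := exists_supConv_eq (ε := ε) hK hu ⟨x, hx⟩ x
  have hxy : ‖x - y‖ ≤ rho ε Ω u := by
    refine le_two_mul_sqrt_of_le_sub_sq_div hε (norm_nonneg _)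
      (le_csSup habs (mem_image_of_mem _ hx)) (hu.abs.le_csSup_image_of_mem_closure habs hycl) ?_
    simpa [hy] using le_supConv hbdd hε.le x hx
  have hyΩ : y ∈ Ω := by
    by_contra hyΩ
    have hfr : y ∈ frontier Ω := ⟨hycl, by rwa [hΩopen.interior_eq]⟩
    linarith [infDist_le_dist_of_mem (x := x) hfr, dist_eq_norm x y]
  have h0 : HasFDerivAt (supConv ε Ω u) (0 : EuclideanSpace ℝ (Fin n) →L[ℝ] ℝ) x := by
    simpa [hgrad] using hdiff.hasGradientAt.hasFDerivAt
  obtain rfl := eq_of_hasFDerivAt_supConv_zero hbdd hε hyΩ hy h0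
  have hmax := (isMaxOn_of_supConv_eq_self hbdd hupos hlogconc hε hx (by simpa using hy)).closure hu
  exact (IsGreatest.csSup_eq ⟨mem_image_of_mem u (subset_closure hx), by
    rintro _ ⟨z, hz, rfl⟩; exact isMaxOn_iff.1 hmax z hz⟩).symm

theorem supConv_critical_point_is_max
    {n : ℕ} (Ω : Set (EuclideanSpace ℝ (Fin n)))
    (hΩopen : IsOpen Ω) (hΩbdd : Bornology.IsBounded Ω) (hΩconv : Convex ℝ Ω)
    (u : EuclideanSpace ℝ (Fin n) → ℝ)
    (hu : ContinuousOn u (closure Ω))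
    (hu0 : ∀ x ∈ frontier Ω, u x = 0)
    (hupos : ∀ x ∈ Ω, 0 < u x)
    (hlogconc : ConcaveOn ℝ Ω (fun x => Real.log (u x)))
    (ε : ℝ) (hε : 0 < ε)
    (x : EuclideanSpace ℝ (Fin n)) (hx : x ∈ Ω)
    (hdist : rho ε Ω u < Metric.infDist x (frontier Ω))
    (hdiff : DifferentiableAt ℝ (supConv ε Ω u) x)
    (hgrad : gradient (supConv ε Ω u) x = 0) :
    u x = sSup (u '' closure Ω) :=
  supConv_critical_point_is_max_general Ω hΩopen hΩbdd u hu hupos hlogconc ε hε x hx hdist hdiff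
    hgrad
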